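/- arXiv:2506.04298 — 2 statements merged into one kernel-verified Lean document; each statement's English description precedes it below -/
import Mathlib

section
/- Let 0 < θ₁, θ₂ < π/2 with θ₁ ≠ θ₂, let ω₁ ≠ ω₂ be real numbers, let t ≠ 0 be real, and define ρ_j = v_j v_j* where v_j = (cos θ_j, sin θ_j e^{−iω_j t}) for j = 1,2, and ρ₃ = diag(1,0), ρ₄ = diag(0,1). If additionally e^{i(ω₂−ω₁)t} ∉ ℝ, then ρ₁, ρ₂, ρ₃, ρ₄ are linearly independent over ℝ in the space of 2×2 Hermitian matrices. -/
open Matrix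

/-- The Weinberg-evolved pure qubit state `v v*` with
`v = (cos θ, sin θ · e^{-iωt})`. -/
noncomputable def weinbergState (θ ω t : ℝ) : Matrix (Fin 2) (Fin 2) ℂ :=
  vecMulVec ![(Real.cos θ : ℂ), (Real.sin θ : ℂ) * Complex.exp (-Complex.I * ω * t)]
    (star ![(Real.cos θ : ℂ), (Real.sin θ : ℂ) * Complex.exp (-Complex.I * ω * t)])

/-!
A real relation among the four matrices, read in the off-diagonal entry, is a real relation between
the complex numbers `cos θⱼ sin θⱼ e^{iωⱼt}`; these are `ℝ`-independent because their quotient is a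
positive multiple of `e^{i(ω₂-ω₁)t} ∉ ℝ`. The diagonal entries then kill the coefficients of
`diag(1,0)` and `diag(0,1)`.
-/

lemma weinbergState_apply_zero_one (θ ω t : ℝ) :
    weinbergState θ ω t 0 1 = (Real.cos θ * Real.sin θ : ℝ) * Complex.exp (Complex.I * ω * t) := by
  simp only [weinbergState, vecMulVec_apply, Pi.star_apply, cons_val_zero, cons_val_one,
    star_mul', Complex.star_def, ← Complex.exp_conj, map_mul, map_neg, Complex.conj_I,
    Complex.conj_ofReal, Complex.ofReal_mul]
  ring_nf

lemma Complex.linearIndependent_pair_of_im_div_ne_zero {u w : ℂ} (h : (w / u).im ≠ 0) :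
    LinearIndependent ℝ ![u, w] := by
  have hu : u ≠ 0 := by
    rintro rfl
    simp at h
  rw [LinearIndependent.pair_iff' hu]
  rintro a rfl
  simp [Complex.real_smul, hu] at h

lemma linearIndependent_pair_diag_of_linearIndependent_apply_zero_one
    {R A : Type*} [CommRing R] [Ring A] [Algebra R A] [FaithfulSMul R A]
    {M N : Matrix (Fin 2) (Fin 2) A} (h : LinearIndependent R ![M 0 1, N 0 1]) :
    LinearIndependent R ![M, N, !![1, 0; 0, 0], !![0, 0; 0, 1]] := by
  rw [Fintype.linearIndependent_iff]
  intro c hc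
  simp only [Fin.sum_univ_four, cons_val_zero, cons_val_one, cons_val_two, cons_val_three,
    tail_cons, head_cons] at hc
  obtain ⟨hc₀, hc₁⟩ : c 0 = 0 ∧ c 1 = 0 :=
    LinearIndependent.pair_iff.mp h _ _ (by simpa using congrFun (congrFun hc 0) 1)
  have hc₂ : c 2 = 0 := by
    simpa [hc₀, hc₁, ← Algebra.algebraMap_eq_smul_one] using congrFun (congrFun hc 0) 0
  have hc₃ : c 3 = 0 := by
    simpa [hc₀, hc₁, ← Algebra.algebraMap_eq_smul_one] using congrFun (congrFun hc 1) 1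
  intro i
  fin_cases i
  exacts [hc₀, hc₁, hc₂, hc₃]

lemma Real.cos_mul_sin_pos {θ : ℝ} (h₀ : 0 < θ) (h₁ : θ < Real.pi / 2) :
    0 < Real.cos θ * Real.sin θ :=
  mul_pos (Real.cos_pos_of_mem_Ioo ⟨by linarith [Real.pi_pos], h₁⟩)
    (Real.sin_pos_of_pos_of_lt_pi h₀ (by linarith [Real.pi_pos]))

theorem stmt_15_general (θ₁ θ₂ ω₁ ω₂ t : ℝ)
    (h₁ : 0 < θ₁) (h₁' : θ₁ < Real.pi / 2)
    (h₂ : 0 < θ₂) (h₂' : θ₂ < Real.pi / 2)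
    (hph : (Complex.exp (Complex.I * (ω₂ - ω₁) * t)).im ≠ 0) :
    LinearIndependent ℝ
      ![weinbergState θ₁ ω₁ t, weinbergState θ₂ ω₂ t,
        (!![1, 0; 0, 0] : Matrix (Fin 2) (Fin 2) ℂ),
        (!![0, 0; 0, 1] : Matrix (Fin 2) (Fin 2) ℂ)] := by
  apply linearIndependent_pair_diag_of_linearIndependent_apply_zero_one
  apply Complex.linearIndependent_pair_of_im_div_ne_zero
  have hquot : weinbergState θ₂ ω₂ t 0 1 / weinbergState θ₁ ω₁ t 0 1 =
      ((Real.cos θ₂ * Real.sin θ₂) / (Real.cos θ₁ * Real.sin θ₁) : ℝ) *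
        Complex.exp (Complex.I * (ω₂ - ω₁) * t) := by
    rw [weinbergState_apply_zero_one, weinbergState_apply_zero_one, mul_div_mul_comm,
      ← Complex.exp_sub, Complex.ofReal_div]
    ring_nf
  rw [hquot, Complex.im_ofReal_mul]
  exact mul_ne_zero (div_pos (Real.cos_mul_sin_pos h₂ h₂') (Real.cos_mul_sin_pos h₁ h₁')).ne' hph

theorem stmt_15 (θ₁ θ₂ ω₁ ω₂ t : ℝ)
    (h₁ : 0 < θ₁) (h₁' : θ₁ < Real.pi / 2)
    (h₂ : 0 < θ₂) (h₂' : θ₂ < Real.pi / 2)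
    (hθ : θ₁ ≠ θ₂) (hω : ω₁ ≠ ω₂) (ht : t ≠ 0)
    (hph : (Complex.exp (Complex.I * (ω₂ - ω₁) * t)).im ≠ 0) :
    LinearIndependent ℝ
      ![weinbergState θ₁ ω₁ t, weinbergState θ₂ ω₂ t,
        (!![1, 0; 0, 0] : Matrix (Fin 2) (Fin 2) ℂ),
        (!![0, 0; 0, 1] : Matrix (Fin 2) (Fin 2) ℂ)] :=
  stmt_15_general θ₁ θ₂ ω₁ ω₂ t h₁ h₁' h₂ h₂' hph
end

section
/- Suppose α₁, α₂, α₃, α₄ are real numbers, θ₁, θ₂ ∈ (0, π/2), ω₁ ≠ ω₂, t real with sin((ω₂ − ω₁)t) ≠ 0, and the following hold: α₁cos²θ₁ + α₂cos²θ₂ + α₃ = 0; α₁sin²θ₁ + α₂sin²θ₂ + α₄ = 0; and α₁ cosθ₁ sinθ₁ e^{±iω₁ t} + α₂ cosθ₂ sinθ₂ e^{±iω₂ t} = 0 for both choices of sign. Then α₁ = α₂ = α₃ = α₄ = 0. -/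
theorem stmt_16 (α₁ α₂ α₃ α₄ θ₁ θ₂ ω₁ ω₂ t : ℝ)
    (h₁ : 0 < θ₁) (h₁' : θ₁ < Real.pi / 2)
    (h₂ : 0 < θ₂) (h₂' : θ₂ < Real.pi / 2)
    (hω : ω₁ ≠ ω₂) (hsin : Real.sin ((ω₂ - ω₁) * t) ≠ 0)
    (e1 : α₁ * Real.cos θ₁ ^ 2 + α₂ * Real.cos θ₂ ^ 2 + α₃ = 0)
    (e2 : α₁ * Real.sin θ₁ ^ 2 + α₂ * Real.sin θ₂ ^ 2 + α₄ = 0)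
    (e3 : (α₁ : ℂ) * Real.cos θ₁ * Real.sin θ₁ * Complex.exp (Complex.I * ω₁ * t)
        + (α₂ : ℂ) * Real.cos θ₂ * Real.sin θ₂ * Complex.exp (Complex.I * ω₂ * t) = 0)
    (e4 : (α₁ : ℂ) * Real.cos θ₁ * Real.sin θ₁ * Complex.exp (-(Complex.I * ω₁ * t))
        + (α₂ : ℂ) * Real.cos θ₂ * Real.sin θ₂ * Complex.exp (-(Complex.I * ω₂ * t)) = 0) :
    α₁ = 0 ∧ α₂ = 0 ∧ α₃ = 0 ∧ α₄ = 0 := by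
  set a : ℂ := (α₁ : ℂ) * Real.cos θ₁ * Real.sin θ₁ with ha
  set b : ℂ := (α₂ : ℂ) * Real.cos θ₂ * Real.sin θ₂ with hb
  set s : ℝ := (ω₂ - ω₁) * t with hs
  have E2 : Complex.exp (Complex.I * ω₂ * t)
      = Complex.exp ((s : ℂ) * Complex.I) * Complex.exp (Complex.I * ω₁ * t) := by
    rw [← Complex.exp_add]; congr 1; rw [hs]; push_cast; ring
  have E2' : Complex.exp (-(Complex.I * ω₂ * t))
      = Complex.exp (-((s : ℂ) * Complex.I)) * Complex.exp (-(Complex.I * ω₁ * t)) := by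
    rw [← Complex.exp_add]; congr 1; rw [hs]; push_cast; ring
  have h3 : a + b * Complex.exp ((s : ℂ) * Complex.I) = 0 := by
    have hth : (a + b * Complex.exp ((s : ℂ) * Complex.I)) * Complex.exp (Complex.I * ω₁ * t) = 0 := by
      rw [E2] at e3; linear_combination e3
    exact (mul_eq_zero.mp hth).resolve_right (Complex.exp_ne_zero _)
  have h4 : a + b * Complex.exp (-((s : ℂ) * Complex.I)) = 0 := by
    have hth : (a + b * Complex.exp (-((s : ℂ) * Complex.I))) * Complex.exp (-(Complex.I * ω₁ * t)) = 0 := by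
      rw [E2'] at e4; linear_combination e4
    exact (mul_eq_zero.mp hth).resolve_right (Complex.exp_ne_zero _)
  have hdiff : b * (2 * Complex.sin s * Complex.I) = 0 := by
    have h5 : Complex.exp ((s : ℂ) * Complex.I) - Complex.exp (-((s : ℂ) * Complex.I))
        = 2 * Complex.sin s * Complex.I := by
      rw [show -((s : ℂ) * Complex.I) = (-(s : ℂ)) * Complex.I by ring,
        Complex.exp_mul_I, Complex.exp_mul_I, Complex.cos_neg, Complex.sin_neg]
      ring
    linear_combination h3 - h4 - b * h5
  have hsinC : Complex.sin s ≠ 0 := by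
    rw [← Complex.ofReal_sin]
    exact_mod_cast Complex.ofReal_ne_zero.mpr hsin
  have hb0 : b = 0 := by
    rcases mul_eq_zero.mp hdiff with h | h
    · exact h
    · exfalso
      have : (2 : ℂ) * Complex.sin s * Complex.I ≠ 0 := by
        simp [hsinC, Complex.I_ne_zero]
      exact this h
  have ha0 : a = 0 := by
    have := h3; rw [hb0] at this; simpa using this
  have hc1 : Real.cos θ₁ * Real.sin θ₁ ≠ 0 :=
    mul_ne_zero (ne_of_gt (Real.cos_pos_of_mem_Ioo ⟨by linarith [Real.pi_pos], h₁'⟩))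
      (ne_of_gt (Real.sin_pos_of_pos_of_lt_pi h₁ (by linarith [Real.pi_pos])))
  have hc2 : Real.cos θ₂ * Real.sin θ₂ ≠ 0 :=
    mul_ne_zero (ne_of_gt (Real.cos_pos_of_mem_Ioo ⟨by linarith [Real.pi_pos], h₂'⟩))
      (ne_of_gt (Real.sin_pos_of_pos_of_lt_pi h₂ (by linarith [Real.pi_pos])))
  have hα₁ : α₁ = 0 := by
    have : (α₁ : ℂ) * (Real.cos θ₁ * Real.sin θ₁) = 0 := by
      rw [ha] at ha0; linear_combination ha0
    have := mul_eq_zero.mp this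
    rcases this with h | h
    · exact_mod_cast h
    · exact absurd (by exact_mod_cast h) hc1
  have hα₂ : α₂ = 0 := by
    have : (α₂ : ℂ) * (Real.cos θ₂ * Real.sin θ₂) = 0 := by
      rw [hb] at hb0; linear_combination hb0
    rcases mul_eq_zero.mp this with h | h
    · exact_mod_cast h
    · exact absurd (by exact_mod_cast h) hc2
  refine ⟨hα₁, hα₂, ?_, ?_⟩ <;> subst hα₁ <;> subst hα₂ <;> linarith
end
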